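/- Let G be a bull-free graph with no K_4 subgraph, and let Q = v_1 v_2 ... v_p v_1 be a smallest induced odd cycle in G of length p ≥ 5. If w ∈ B_i ∪ C_i, w' ∈ B_{i+1} ∪ C_{i+1}, and ww' is an edge of G, then w ∈ B_i* or w' ∈ B_{i+1}*. -/

import Mathlib

/-! If neither `w ∈ B_i*` nor `w' ∈ B_{i+1}*`, then `w ∈ C_i` or `w` has a neighbour
`u ∈ B_i ∪ C_i`, and likewise `w' ∈ C_{i+1}` or `w'` has a neighbour `u' ∈ B_{i+1} ∪ C_{i+1}`.
Bull-freeness forces such a `u` to be adjacent to `w'` (otherwise `w', w, u, v_i, v_{i-1}` is a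
bull), and such a `u'` to be adjacent to `w` and to `u` (with the cycle edge `v_{i+3} v_{i+4}`).
So each of the four cases yields a `K_4`: `{w, u, w', u'}`, `{w, u, w', v_{i+2}}`,
`{w, w', u', v_{i+1}}` or `{w, w', v_{i+1}, v_{i+2}}`. -/

/-- `H` is contained in `G` as an induced subgraph. -/
def ContainsInduced {α β : Type*} (H : SimpleGraph α) (G : SimpleGraph β) : Prop :=
  ∃ f : α ↪ β, ∀ a b, G.Adj (f a) (f b) ↔ H.Adj a b

/-- The bull: a triangle `v2 v3 v4` with pendant edges `v1 v2` and `v4 v5`. -/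
def bull : SimpleGraph (Fin 5) :=
  SimpleGraph.fromRel (fun a b =>
    ((a : ℕ), (b : ℕ)) ∈ [(0, 1), (1, 2), (2, 3), (3, 4), (1, 3)])

/-- `u : ZMod k → V` lists the vertices (in cyclic order) of an induced cycle of
length `k` in `G`. -/
def IsInducedCycle {V : Type*} (G : SimpleGraph V) {k : ℕ} (u : ZMod k → V) : Prop :=
  Function.Injective u ∧ ∀ i j : ZMod k, G.Adj (u i) (u j) ↔ (j = i + 1 ∨ i = j + 1)

/-- `v : ZMod p → V` is a smallest induced odd cycle of `G` of length `p ≥ 5`: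
an induced odd cycle of length `p ≥ 5` such that `G` has no induced odd cycle of
length `k` with `5 ≤ k < p`. -/
def IsSmallestInducedOddCycle {V : Type*} (G : SimpleGraph V) {p : ℕ}
    (v : ZMod p → V) : Prop :=
  5 ≤ p ∧ Odd p ∧ IsInducedCycle G v ∧
    ∀ k : ℕ, 5 ≤ k → k < p → Odd k → ∀ u : ZMod k → V, ¬ IsInducedCycle G u

/-- `A_i`: the vertices outside the cycle `Q` whose neighbourhood on `Q` is
exactly `{v_i}`. -/
def setA {V : Type*} (G : SimpleGraph V) {p : ℕ} (v : ZMod p → V) (i : ZMod p) :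
    Set V :=
  {w | w ∉ Set.range v ∧ ∀ j : ZMod p, G.Adj w (v j) ↔ j = i}

/-- `B_i`: the vertices outside the cycle `Q` whose neighbourhood on `Q` is
exactly `{v_i, v_{i+2}}`. -/
def setB {V : Type*} (G : SimpleGraph V) {p : ℕ} (v : ZMod p → V) (i : ZMod p) :
    Set V :=
  {w | w ∉ Set.range v ∧ ∀ j : ZMod p, G.Adj w (v j) ↔ (j = i ∨ j = i + 2)}

/-- `C_i`: the vertices outside the cycle `Q` whose neighbourhood on `Q` is
exactly `{v_i, v_{i+1}, v_{i+2}}`. -/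
def setC {V : Type*} (G : SimpleGraph V) {p : ℕ} (v : ZMod p → V) (i : ZMod p) :
    Set V :=
  {w | w ∉ Set.range v ∧ ∀ j : ZMod p, G.Adj w (v j) ↔ (j = i ∨ j = i + 1 ∨ j = i + 2)}

/-- `D_i`: the vertices outside the cycle `Q` whose neighbourhood on `Q` is
exactly `{v_i, v_{i+1}, v_{i+2}, v_{i+3}}`. -/
def setD {V : Type*} (G : SimpleGraph V) {p : ℕ} (v : ZMod p → V) (i : ZMod p) :
    Set V :=
  {w | w ∉ Set.range v ∧
    ∀ j : ZMod p, G.Adj w (v j) ↔ (j = i ∨ j = i + 1 ∨ j = i + 2 ∨ j = i + 3)}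

/-- `A_i'`: the vertices of `A_i` having a neighbour in `A_i`. -/
def setA' {V : Type*} (G : SimpleGraph V) {p : ℕ} (v : ZMod p → V) (i : ZMod p) :
    Set V :=
  {w ∈ setA G v i | ∃ w' ∈ setA G v i, G.Adj w w'}

/-- `B_i'`: the vertices of `B_i` having a neighbour in `B_i ∪ C_i`. -/
def setB' {V : Type*} (G : SimpleGraph V) {p : ℕ} (v : ZMod p → V) (i : ZMod p) :
    Set V :=
  {w ∈ setB G v i | ∃ w' ∈ setB G v i ∪ setC G v i, G.Adj w w'}

/-- `B_i* = B_i ∖ B_i'`: the vertices of `B_i` with no neighbour in `B_i ∪ C_i`. -/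
def setBstar {V : Type*} (G : SimpleGraph V) {p : ℕ} (v : ZMod p → V) (i : ZMod p) :
    Set V :=
  setB G v i \ setB' G v i

namespace SimpleGraph

variable {V : Type*} {G : SimpleGraph V}

theorem adj_of_not_containsInduced_bull (hbull : ¬ ContainsInduced bull G) {y x u a b : V}
    (hyx : G.Adj y x) (hxu : G.Adj x u) (hxa : G.Adj x a) (hua : G.Adj u a) (hab : G.Adj a b)
    (hya : ¬ G.Adj y a) (hyb : ¬ G.Adj y b) (hxb : ¬ G.Adj x b) (hub : ¬ G.Adj u b) :
    G.Adj y u := by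
  by_contra hyu
  have hyb' : y ≠ b := fun h => hxb (h ▸ hyx.symm)
  have hya' : y ≠ a := fun h => hyb (h ▸ hab)
  have hyu' : y ≠ u := fun h => hya (h ▸ hua)
  have hxb' : x ≠ b := fun h => hub (h ▸ hxu.symm)
  have hub' : u ≠ b := fun h => hxb (h ▸ hxu)
  refine hbull ⟨⟨![y, x, u, a, b], fun m n hmn => ?_⟩, fun m n => ?_⟩
  · fin_cases m <;> fin_cases n <;> simp_all [hyx.ne, hxu.ne, hxa.ne, hua.ne, hab.ne, eq_comm]
  · change G.Adj (![y, x, u, a, b] m) (![y, x, u, a, b] n) ↔ bull.Adj m n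
    fin_cases m <;> fin_cases n <;> simp [bull, adj_comm, *]

theorem not_cliqueFree_four_of_adj {a b c d : V} (hab : G.Adj a b) (hac : G.Adj a c)
    (hbc : G.Adj b c) (hda : G.Adj d a) (hdb : G.Adj d b) (hdc : G.Adj d c) :
    ¬ G.CliqueFree 4 := by
  classical
  exact fun h => h (insert d {a, b, c})
    ((is3Clique_triple_iff.2 ⟨hab, hac, hbc⟩).insert (by simp [hda, hdb, hdc]))

end SimpleGraph

section CycleNeighbours

variable {V : Type*} {G : SimpleGraph V} {p : ℕ} {v : ZMod p → V} {k j : ZMod p} {x : V}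

theorem adj_self_of_mem_setB_union_setC (hx : x ∈ setB G v k ∪ setC G v k) : G.Adj x (v k) := by
  rcases hx with hx | hx <;> simp [hx.2]

theorem adj_add_two_of_mem_setB_union_setC (hx : x ∈ setB G v k ∪ setC G v k) :
    G.Adj x (v (k + 2)) := by
  rcases hx with hx | hx <;> simp [hx.2]

theorem adj_add_one_of_mem_setC (hx : x ∈ setC G v k) : G.Adj x (v (k + 1)) := by
  simp [hx.2]

theorem eq_of_adj_of_mem_setB_union_setC (hx : x ∈ setB G v k ∪ setC G v k)
    (h : G.Adj x (v j)) : j = k ∨ j = k + 1 ∨ j = k + 2 := by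
  rcases hx with hx | hx
  · rcases (hx.2 j).1 h with h | h <;> simp [h]
  · exact (hx.2 j).1 h

theorem not_adj_of_sub_eq (hx : x ∈ setB G v k ∪ setC G v k) {d : ℤ} (hjk : j - k = d)
    (hlo : 2 - (p : ℤ) < d) (hhi : d < p) (hd : d < 0 ∨ 2 < d) : ¬ G.Adj x (v j) := by
  intro h
  obtain ⟨e, he₀, he₂, hje⟩ : ∃ e : ℤ, 0 ≤ e ∧ e ≤ 2 ∧ j - k = e := by
    rcases eq_of_adj_of_mem_setB_union_setC hx h with rfl | rfl | rfl
    exacts [⟨0, by simp⟩, ⟨1, by simp⟩, ⟨2, by norm_num⟩]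
  have hdvd : (p : ℤ) ∣ d - e := by
    rw [← ZMod.intCast_zmod_eq_zero_iff_dvd, Int.cast_sub, ← hjk, ← hje, sub_self]
  have := Int.eq_zero_of_abs_lt_dvd hdvd (abs_lt.2 ⟨by omega, by omega⟩)
  omega

theorem mem_setC_or_exists_adj_of_notMem_setBstar (hx : x ∈ setB G v k ∪ setC G v k)
    (h : x ∉ setBstar G v k) : x ∈ setC G v k ∨ ∃ u ∈ setB G v k ∪ setC G v k, G.Adj x u := by
  rcases hx with hx | hx
  · exact Or.inr (by simpa [setBstar, setB', hx] using h)
  · exact Or.inl hx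

end CycleNeighbours

section BullFree

variable {V : Type*} {G : SimpleGraph V} {p : ℕ} {v : ZMod p → V} {k : ZMod p} {x u y : V}

theorem adj_of_adj_of_mem_succ (hbull : ¬ ContainsInduced bull G) (hv : IsInducedCycle G v)
    (hp : 5 ≤ p) (hx : x ∈ setB G v k ∪ setC G v k) (hu : u ∈ setB G v k ∪ setC G v k)
    (hy : y ∈ setB G v (k + 1) ∪ setC G v (k + 1)) (hxu : G.Adj x u) (hxy : G.Adj x y) :
    G.Adj y u :=
  G.adj_of_not_containsInduced_bull hbull hxy.symm hxu (adj_self_of_mem_setB_union_setC hx)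
    (adj_self_of_mem_setB_union_setC hu) ((hv.2 k (k - 1)).2 (Or.inr (by ring)))
    (not_adj_of_sub_eq hy (d := -1) (by push_cast; ring) (by omega) (by omega) (by omega))
    (not_adj_of_sub_eq hy (d := -2) (by push_cast; ring) (by omega) (by omega) (by omega))
    (not_adj_of_sub_eq hx (d := -1) (by push_cast; ring) (by omega) (by omega) (by omega))
    (not_adj_of_sub_eq hu (d := -1) (by push_cast; ring) (by omega) (by omega) (by omega))

theorem adj_of_adj_of_mem_pred (hbull : ¬ ContainsInduced bull G) (hv : IsInducedCycle G v)
    (hp : 5 ≤ p) (hx : x ∈ setB G v (k + 1) ∪ setC G v (k + 1))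
    (hu : u ∈ setB G v (k + 1) ∪ setC G v (k + 1)) (hy : y ∈ setB G v k ∪ setC G v k)
    (hxu : G.Adj x u) (hxy : G.Adj x y) : G.Adj y u :=
  G.adj_of_not_containsInduced_bull hbull hxy.symm hxu (adj_add_two_of_mem_setB_union_setC hx)
    (adj_add_two_of_mem_setB_union_setC hu) ((hv.2 (k + 1 + 2) (k + 4)).2 (Or.inl (by ring)))
    (not_adj_of_sub_eq hy (d := 3) (by push_cast; ring) (by omega) (by omega) (by omega))
    (not_adj_of_sub_eq hy (d := 4) (by push_cast; ring) (by omega) (by omega) (by omega))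
    (not_adj_of_sub_eq hx (d := 3) (by push_cast; ring) (by omega) (by omega) (by omega))
    (not_adj_of_sub_eq hu (d := 3) (by push_cast; ring) (by omega) (by omega) (by omega))

end BullFree

theorem edge_consecutive_imp_Bstar_general {V : Type*} (G : SimpleGraph V)
    (hbull : ¬ ContainsInduced bull G) (hK4 : G.CliqueFree 4)
    {p : ℕ} (v : ZMod p → V) (hQ : IsSmallestInducedOddCycle G v)
    (i : ZMod p) (w w' : V)
    (hw : w ∈ setB G v i ∪ setC G v i) (hw' : w' ∈ setB G v (i + 1) ∪ setC G v (i + 1))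
    (hadj : G.Adj w w') :
    w ∈ setBstar G v i ∨ w' ∈ setBstar G v (i + 1) := by
  obtain ⟨hp, -, hv, -⟩ := hQ
  have hi : i + 1 + 1 = i + 2 := by ring
  by_contra! h
  rcases mem_setC_or_exists_adj_of_notMem_setBstar hw h.1 with hwC | ⟨u, hu, hwu⟩ <;>
    rcases mem_setC_or_exists_adj_of_notMem_setBstar hw' h.2 with hw'C | ⟨u', hu', hw'u'⟩
  · have hw'₂ : G.Adj w' (v (i + 2)) := hi ▸ adj_add_one_of_mem_setC hw'C
    exact G.not_cliqueFree_four_of_adj hadj (adj_add_one_of_mem_setC hwC)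
      (adj_self_of_mem_setB_union_setC hw') (adj_add_two_of_mem_setB_union_setC (Or.inr hwC)).symm
      hw'₂.symm ((hv.2 _ _).2 (Or.inr hi.symm)) hK4
  · have hwu' := adj_of_adj_of_mem_pred hbull hv hp hw' hu' hw hw'u' hadj.symm
    exact G.not_cliqueFree_four_of_adj hadj hwu' hw'u' (adj_add_one_of_mem_setC hwC).symm
      (adj_self_of_mem_setB_union_setC hw').symm (adj_self_of_mem_setB_union_setC hu').symm hK4
  · have huw' := adj_of_adj_of_mem_succ hbull hv hp hw hu hw' hwu hadj
    have hw'₂ : G.Adj w' (v (i + 2)) := hi ▸ adj_add_one_of_mem_setC hw'C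
    exact G.not_cliqueFree_four_of_adj hwu hadj huw'.symm
      (adj_add_two_of_mem_setB_union_setC hw).symm (adj_add_two_of_mem_setB_union_setC hu).symm
      hw'₂.symm hK4
  · have huw' := adj_of_adj_of_mem_succ hbull hv hp hw hu hw' hwu hadj
    exact G.not_cliqueFree_four_of_adj hwu hadj huw'.symm
      (adj_of_adj_of_mem_pred hbull hv hp hw' hu' hw hw'u' hadj.symm).symm
      (adj_of_adj_of_mem_pred hbull hv hp hw' hu' hu hw'u' huw').symm hw'u'.symm hK4

/-- Let `G` be a bull-free graph with no `K_4` subgraph, and let `Q` be a smallest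
induced odd cycle of `G` of length `p ≥ 5`.  If `w ∈ B_i ∪ C_i`, `w' ∈ B_{i+1} ∪ C_{i+1}`
and `w w'` is an edge of `G`, then `w ∈ B_i*` or `w' ∈ B_{i+1}*`. -/
theorem edge_consecutive_imp_Bstar {V : Type*} [Fintype V] (G : SimpleGraph V)
    (hbull : ¬ ContainsInduced bull G) (hK4 : G.CliqueFree 4)
    {p : ℕ} (v : ZMod p → V) (hQ : IsSmallestInducedOddCycle G v)
    (i : ZMod p) (w w' : V)
    (hw : w ∈ setB G v i ∪ setC G v i) (hw' : w' ∈ setB G v (i + 1) ∪ setC G v (i + 1))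
    (hadj : G.Adj w w') :
    w ∈ setBstar G v i ∨ w' ∈ setBstar G v (i + 1) :=
  edge_consecutive_imp_Bstar_general G hbull hK4 v hQ i w w' hw hw' hadj
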